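/- arXiv:0909.0720 — 2 statements merged into one kernel-verified Lean document; each statement's English description precedes it below -/
import Mathlib

section
/- Let (W,S) be a Coxeter system in which every pair of distinct generators commutes (m(s,t) = 2 for all s ≠ t) or satisfies no relation (m(s,t) = infinity). Then an element of W equals the identity if and only if any word representing it can be reduced to the empty word using only deletions of factors ss and swaps of adjacent commuting generators. -/
/-!
Moves preserve the product, which gives one direction. Conversely, `W` acts on words modulo
moves by prepending letters: the Coxeter relations hold there because `s s ω ~ ω` and, when
`m(s,t) = 2`, `s t s t ω ~ s s t t ω ~ ω`. Hence `π ω = 1` puts `ω` in the class of the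
empty word. It remains to see that reducibility to `[]` is constant on classes, i.e. that
deleting `ss` never destroys reducibility. For this, the deletion is generalised to cancelling
two letters `s` separated by letters that all commute with `s`; this operation is compatible
with every move, so one can induct on the length of a reduction.
-/

/-- A single elementary move on words in a right-angled Coxeter system: deletion of a
factor `ss`, or swap of an adjacent pair of commuting generators (`m(s,t) = 2`). -/
def RAMove {B : Type*} (M : CoxeterMatrix B) (ω ω' : List B) : Prop :=
  (∃ (l₁ l₂ : List B) (s : B), ω = l₁ ++ [s, s] ++ l₂ ∧ ω' = l₁ ++ l₂) ∨
  (∃ (l₁ l₂ : List B) (s t : B), M s t = 2 ∧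
    ω = l₁ ++ [s, t] ++ l₂ ∧ ω' = l₁ ++ [t, s] ++ l₂)

theorem List.append_cons_cons_eq_append_cons_iff {α : Type*} {a₁ a₂ l r : List α} {u v x : α} :
    a₁ ++ u :: v :: a₂ = l ++ x :: r ↔
      (∃ c, l = a₁ ++ u :: v :: c ∧ a₂ = c ++ x :: r) ∨
      (l = a₁ ++ [u] ∧ v = x ∧ a₂ = r) ∨
      (a₁ = l ∧ u = x ∧ r = v :: a₂) ∨
      (∃ c, a₁ = l ++ x :: c ∧ r = c ++ u :: v :: a₂) := by
  constructor
  · intro h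
    rcases List.append_eq_append_iff.mp h with ⟨c, rfl, h⟩ | ⟨c, rfl, h⟩
    · rcases c with _ | ⟨w, _ | ⟨w', c⟩⟩ <;> simp_all
    · rcases c with _ | ⟨w, c⟩ <;> simp_all
  · rintro (⟨c, rfl, rfl⟩ | ⟨rfl, rfl, rfl⟩ | ⟨rfl, rfl, rfl⟩ | ⟨c, rfl, rfl⟩) <;> simp

section RightAngled

open Relation

variable {B : Type*} {M : CoxeterMatrix B} {ω ω' : List B}

namespace RAMove

theorem delete (l₁ l₂ : List B) (s : B) : RAMove M (l₁ ++ s :: s :: l₂) (l₁ ++ l₂) :=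
  .inl ⟨l₁, l₂, s, by simp, rfl⟩

theorem swap (l₁ l₂ : List B) {s t : B} (h : M s t = 2) :
    RAMove M (l₁ ++ s :: t :: l₂) (l₁ ++ t :: s :: l₂) :=
  .inr ⟨l₁, l₂, s, t, h, by simp, by simp⟩

theorem cons (a : B) (h : RAMove M ω ω') : RAMove M (a :: ω) (a :: ω') := by
  rcases h with ⟨l₁, l₂, s, rfl, rfl⟩ | ⟨l₁, l₂, s, t, hst, rfl, rfl⟩
  · simpa using delete (M := M) (a :: l₁) l₂ s
  · simpa using swap (a :: l₁) l₂ hst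

theorem wordProd_eq {W : Type*} [Group W] (cs : CoxeterSystem M W) (h : RAMove M ω ω') :
    cs.wordProd ω = cs.wordProd ω' := by
  rcases h with ⟨l₁, l₂, s, rfl, rfl⟩ | ⟨l₁, l₂, s, t, hst, rfl, rfl⟩
  · simp [cs.wordProd_append, cs.wordProd_cons, cs.simple_mul_simple_cancel_left]
  · have hcomm : cs.simple s * cs.simple t = cs.simple t * cs.simple s := by
      have := cs.wordProd_braidWord_eq s t
      rw [CoxeterSystem.braidWord, CoxeterSystem.braidWord, M.symmetric t s, hst] at this
      simpa [CoxeterSystem.alternatingWord, CoxeterSystem.wordProd] using this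
    simp [cs.wordProd_append, cs.wordProd_cons, ← mul_assoc, hcomm]

end RAMove

theorem wordProd_eq_one_of_reflTransGen_nil {W : Type*} [Group W] (cs : CoxeterSystem M W)
    (h : ReflTransGen (RAMove M) ω []) : cs.wordProd ω = 1 := by
  induction h using ReflTransGen.head_induction_on with
  | refl => exact cs.wordProd_nil
  | head hmove _ ih => exact (hmove.wordProd_eq cs).trans ih

theorem reflTransGen_slide_right {s : B} {m : List B} (hm : ∀ x ∈ m, M s x = 2)
    (l₁ l₂ : List B) : ReflTransGen (RAMove M) (l₁ ++ s :: m ++ l₂) (l₁ ++ m ++ s :: l₂) := by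
  induction m generalizing l₁ with
  | nil => simpa using ReflTransGen.refl
  | cons x m ih =>
    refine .head (by simpa using RAMove.swap l₁ (m ++ l₂) (hm x (by simp))) ?_
    simpa using ih (fun y hy => hm y (by simp [hy])) (l₁ ++ [x])

theorem reflTransGen_slide_left {s : B} {m : List B} (hm : ∀ x ∈ m, M s x = 2)
    (l₁ l₂ : List B) : ReflTransGen (RAMove M) (l₁ ++ m ++ s :: l₂) (l₁ ++ s :: m ++ l₂) := by
  induction m generalizing l₁ with
  | nil => simpa using ReflTransGen.refl
  | cons x m ih =>
    refine .tail (by simpa using ih (fun y hy => hm y (by simp [hy])) (l₁ ++ [x])) ?_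
    simpa using RAMove.swap l₁ (m ++ l₂) ((M.symmetric x s).trans (hm x (by simp)))

def RACancel (M : CoxeterMatrix B) (ω ω' : List B) : Prop :=
  ∃ l₁ m l₂ s, (∀ x ∈ m, M s x = 2) ∧ ω = l₁ ++ s :: m ++ s :: l₂ ∧ ω' = l₁ ++ m ++ l₂

namespace RACancel

theorem reflTransGen_or_of_delete (hc : RACancel M ω ω') {a₁ a₂ : List B} {u : B}
    (hω : ω = a₁ ++ [u, u] ++ a₂) :
    ReflTransGen (RAMove M) ω' (a₁ ++ a₂) ∨ ∃ ω₂, RACancel M (a₁ ++ a₂) ω₂ ∧ RAMove M ω' ω₂ := by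
  obtain ⟨l₁, m, l₂, s, hm, rfl, rfl⟩ := hc
  have hs : ∀ x ∈ m, x ≠ s := fun x hx h => by simpa [h, M.diagonal] using hm x hx
  -- The pair `uu` lies away from both `s`s (the two reductions commute), is `ss` itself, or
  -- overlaps one `s` and so is `ss` with one `s` outside the pattern: sliding that `s` across
  -- `m` turns `ω'` into `ω₂`. It cannot pair an `s` with a letter of `m`, as those differ from `s`.
  simp only [List.append_assoc, List.cons_append] at hω
  rcases List.append_cons_cons_eq_append_cons_iff.mp hω.symm with
    ⟨c, rfl, rfl⟩ | ⟨rfl, rfl, rfl⟩ | ⟨rfl, rfl, h⟩ | ⟨c, rfl, h⟩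
  · exact .inr ⟨_, ⟨a₁ ++ c, m, l₂, s, hm, by simp, rfl⟩,
      by simpa using RAMove.delete a₁ (c ++ m ++ l₂) u⟩
  · exact .inl (by simpa using reflTransGen_slide_right hm a₁ l₂)
  · rcases List.append_eq_cons_iff.mp h with ⟨rfl, h⟩ | ⟨m', rfl, -⟩
    · obtain rfl : l₂ = a₂ := by simpa using h
      exact .inl (by simpa using ReflTransGen.refl)
    · exact absurd rfl (hs u (by simp))
  · rcases List.append_cons_cons_eq_append_cons_iff.mp h.symm with
      ⟨d, rfl, rfl⟩ | ⟨rfl, rfl, rfl⟩ | ⟨rfl, rfl, rfl⟩ | ⟨d, rfl, rfl⟩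
    · refine .inr ⟨_, ⟨l₁, c ++ d, l₂, s, fun x hx => hm x ?_, by simp, rfl⟩,
        by simpa using RAMove.delete (l₁ ++ c) (d ++ l₂) u⟩
      simp at hx ⊢
      tauto
    · exact absurd rfl (hs u (by simp))
    · exact .inl (by simpa using reflTransGen_slide_left hm l₁ a₂)
    · exact .inr ⟨_, ⟨l₁, m, d ++ a₂, s, hm, by simp, rfl⟩,
        by simpa using RAMove.delete (l₁ ++ m ++ d) a₂ u⟩

theorem exists_of_swap (hc : RACancel M ω ω') {a₁ a₂ : List B} {u v : B} (huv : M u v = 2)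
    (hω : ω = a₁ ++ [u, v] ++ a₂) :
    ∃ ω₂, RACancel M (a₁ ++ [v, u] ++ a₂) ω₂ ∧ ReflGen (RAMove M) ω' ω₂ := by
  obtain ⟨l₁, m, l₂, s, hm, rfl, rfl⟩ := hc
  simp only [List.append_assoc, List.cons_append] at hω
  rcases List.append_cons_cons_eq_append_cons_iff.mp hω.symm with
    ⟨c, rfl, rfl⟩ | ⟨rfl, rfl, rfl⟩ | ⟨rfl, rfl, h⟩ | ⟨c, rfl, h⟩
  · exact ⟨_, ⟨a₁ ++ v :: u :: c, m, l₂, s, hm, by simp, rfl⟩,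
      .single (by simpa using RAMove.swap a₁ (c ++ m ++ l₂) huv)⟩
  · refine ⟨_, ⟨a₁, u :: m, l₂, v, ?_, by simp, rfl⟩, by simpa using .refl⟩
    exact List.forall_mem_cons.mpr ⟨(M.symmetric v u).trans huv, hm⟩
  · rcases List.append_eq_cons_iff.mp h with ⟨rfl, h⟩ | ⟨m', rfl, rfl⟩
    · obtain ⟨rfl, rfl⟩ : u = v ∧ l₂ = a₂ := by simpa using h
      exact ⟨_, ⟨a₁, [], l₂, u, hm, by simp, rfl⟩, .refl⟩
    · exact ⟨_, ⟨a₁ ++ [v], m', l₂, u, fun x hx => hm x (by simp [hx]), by simp, rfl⟩,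
        by simpa using .refl⟩
  · rcases List.append_cons_cons_eq_append_cons_iff.mp h.symm with
      ⟨d, rfl, rfl⟩ | ⟨rfl, rfl, rfl⟩ | ⟨rfl, rfl, rfl⟩ | ⟨d, rfl, rfl⟩
    · refine ⟨_, ⟨l₁, c ++ v :: u :: d, l₂, s, fun x hx => hm x ?_, by simp, rfl⟩,
        .single (by simpa using RAMove.swap (l₁ ++ c) (d ++ l₂) huv)⟩
      simp at hx ⊢
      tauto
    · exact ⟨_, ⟨l₁, c, u :: a₂, v, fun x hx => hm x (by simp [hx]), by simp, rfl⟩,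
        by simpa using .refl⟩
    · exact ⟨_, ⟨l₁, c ++ [v], a₂, u, List.forall_mem_append.mpr ⟨hm, by simpa using huv⟩,
        by simp, rfl⟩, by simpa using .refl⟩
    · exact ⟨_, ⟨l₁, m, d ++ v :: u :: a₂, s, hm, by simp, rfl⟩,
        .single (by simpa using RAMove.swap (l₁ ++ m ++ d) a₂ huv)⟩

theorem reflTransGen_nil (hc : RACancel M ω ω') (h : ReflTransGen (RAMove M) ω []) :
    ReflTransGen (RAMove M) ω' [] := by
  induction h using ReflTransGen.head_induction_on generalizing ω' with
  | refl =>
    obtain ⟨l₁, m, l₂, s, -, h, -⟩ := hc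
    simp at h
  | head hmove hrest ih =>
    rcases hmove with ⟨a₁, a₂, u, rfl, rfl⟩ | ⟨a₁, a₂, u, v, huv, rfl, rfl⟩
    · rcases hc.reflTransGen_or_of_delete rfl with h | ⟨ω₂, hc₂, h⟩
      · exact h.trans hrest
      · exact .head h (ih hc₂)
    · obtain ⟨ω₂, hc₂, h⟩ := hc.exists_of_swap huv rfl
      exact h.to_reflTransGen.trans (ih hc₂)

end RACancel

theorem RAMove.reflTransGen_nil_iff (h : RAMove M ω ω') :
    ReflTransGen (RAMove M) ω [] ↔ ReflTransGen (RAMove M) ω' [] := by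
  refine ⟨fun hω => ?_, .head h⟩
  rcases h with ⟨l₁, l₂, s, rfl, rfl⟩ | ⟨l₁, l₂, s, t, hst, rfl, rfl⟩
  · exact RACancel.reflTransGen_nil ⟨l₁, [], l₂, s, by simp, by simp, by simp⟩ hω
  · exact .head (by simpa using RAMove.swap l₁ l₂ ((M.symmetric t s).trans hst)) hω

abbrev RAClass (M : CoxeterMatrix B) : Type _ := Quot (RAMove M)

namespace RAClass

def cons (a : B) : RAClass M → RAClass M := Quot.map (a :: ·) fun _ _ h => h.cons a

theorem cons_mk (a : B) (ω : List B) :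
    cons a (Quot.mk (RAMove M) ω) = Quot.mk (RAMove M) (a :: ω) := rfl

theorem cons_involutive (a : B) : Function.Involutive (cons (M := M) a) := by
  rintro ⟨ω⟩
  exact Quot.sound (by simpa using RAMove.delete [] ω a)

def consPerm (M : CoxeterMatrix B) (a : B) : Equiv.Perm (RAClass M) :=
  (cons_involutive a).toPerm

theorem isLiftable_consPerm (hM : ∀ s t : B, s ≠ t → M s t = 2 ∨ M s t = 0) :
    M.IsLiftable (consPerm M) := by
  intro s t
  obtain rfl | hst := eq_or_ne s t
  · ext x
    simp [consPerm, cons_involutive s x]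
  obtain h | h := hM s t hst
  · rw [h, pow_two]
    ext ⟨ω⟩
    simp only [Equiv.Perm.mul_apply, Equiv.Perm.one_apply, consPerm,
      Function.Involutive.coe_toPerm, cons_mk]
    calc Quot.mk (RAMove M) (s :: t :: s :: t :: ω)
        = Quot.mk _ (s :: s :: t :: t :: ω) :=
          Quot.sound (by simpa using RAMove.swap [s] (t :: ω) ((M.symmetric t s).trans h))
      _ = Quot.mk _ ω :=
          (cons_involutive s (cons t (cons t (Quot.mk _ ω)))).trans (cons_involutive t _)
  · rw [h, pow_zero]

theorem lift_wordProd_mk {W : Type*} [Group W] (cs : CoxeterSystem M W)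
    (hM : ∀ s t : B, s ≠ t → M s t = 2 ∨ M s t = 0) (ω ω' : List B) :
    cs.lift ⟨consPerm M, isLiftable_consPerm hM⟩ (cs.wordProd ω) (Quot.mk _ ω') =
      Quot.mk _ (ω ++ ω') := by
  induction ω with
  | nil => simp
  | cons a ω ih =>
    rw [cs.wordProd_cons, map_mul, Equiv.Perm.mul_apply, ih, cs.lift_apply_simple]
    rfl

theorem reflTransGen_nil_iff_of_mk_eq (h : Quot.mk (RAMove M) ω = Quot.mk _ ω') :
    ReflTransGen (RAMove M) ω [] ↔ ReflTransGen (RAMove M) ω' [] :=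
  Iff.of_eq <| congrArg (Quot.lift (fun ω => ReflTransGen (RAMove M) ω [])
    fun _ _ h => propext h.reflTransGen_nil_iff) h

end RAClass

end RightAngled

/-- Let `(W, S)` be a Coxeter system in which every pair of distinct generators either
commutes (`m(s,t) = 2`) or satisfies no relation (`m(s,t) = ∞`, encoded as `0`).  A word
represents the identity of `W` if and only if it can be reduced to the empty word using
only deletions of factors `ss` and swaps of adjacent commuting generators. -/
theorem stmt_15 (B W : Type*) [Group W] (M : CoxeterMatrix B) (cs : CoxeterSystem M W)
    (hM : ∀ s t : B, s ≠ t → M s t = 2 ∨ M s t = 0) (ω : List B) :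
    cs.wordProd ω = 1 ↔ Relation.ReflTransGen (RAMove M) ω [] := by
  refine ⟨fun h => ?_, wordProd_eq_one_of_reflTransGen_nil cs⟩
  have hmk : Quot.mk (RAMove M) ω = Quot.mk _ [] := by
    simpa [h] using (RAClass.lift_wordProd_mk cs hM ω []).symm
  exact (RAClass.reflTransGen_nil_iff_of_mk_eq hmk).mpr .refl
end

section
/- Let Delta be a simplicial complex, q a nonnegative integer, and sigma_0 a maximal simplex of dimension at least q. The relation of discrete q-homotopy on q-loops based at sigma_0 is an equivalence relation, and concatenation of q-loops induces a group structure on the set A_1^q(Delta, sigma_0) of equivalence classes, with identity the class of the constant loop and with the inverse of the class of (sigma_0, sigma_1, ..., sigma_k, sigma_0) being the class of the reversed loop (sigma_0, sigma_k, ..., sigma_1, sigma_0). -/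
/-- Two simplices are `q`-near if they share at least `q + 1` vertices. -/
def qNear {V : Type*} [DecidableEq V] (q : ℕ) (σ τ : Finset V) : Prop :=
  q + 1 ≤ (σ ∩ τ).card

/-- `σ` is a maximal simplex (facet) of the simplicial complex `Δ`. -/
def IsMaxSimp {V : Type*} (Δ : Set (Finset V)) (σ : Finset V) : Prop :=
  σ ∈ Δ ∧ ∀ τ ∈ Δ, σ ⊆ τ → τ = σ

/-- A `q`-loop based at `σ₀`: a nonempty sequence of maximal simplices starting and ending
at `σ₀` in which consecutive simplices are `q`-near. -/
def IsQLoop {V : Type*} [DecidableEq V] (Δ : Set (Finset V)) (q : ℕ) (σ₀ : Finset V)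
    (l : List (Finset V)) : Prop :=
  l.head? = some σ₀ ∧ l.getLast? = some σ₀ ∧ l.Chain' (qNear q) ∧ ∀ σ ∈ l, IsMaxSimp Δ σ

/-- A discrete homotopy grid between two `q`-loops of the same length: a rectangular grid
whose rows are `q`-loops based at `σ₀`, with first row `a`, last row `b`, and consecutive
rows entrywise `q`-near (so the columns are `q`-chains). -/
def GridStep {V : Type*} [DecidableEq V] (Δ : Set (Finset V)) (q : ℕ) (σ₀ : Finset V)
    (a b : List (Finset V)) : Prop :=
  ∃ rows : List (List (Finset V)), rows.head? = some a ∧ rows.getLast? = some b ∧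
    (∀ r ∈ rows, IsQLoop Δ q σ₀ r) ∧ rows.Chain' (List.Forall₂ (qNear q))

/-- Stretching: repetition of one entry of a `q`-loop. -/
def Stretch {V : Type*} (a b : List (Finset V)) : Prop :=
  ∃ (l₁ l₂ : List (Finset V)) (σ : Finset V),
    a = l₁ ++ [σ] ++ l₂ ∧ b = l₁ ++ [σ, σ] ++ l₂

/-- Discrete `q`-homotopy of `q`-loops: the equivalence relation generated by grid
equivalence together with stretching. -/
def QHomotopic {V : Type*} [DecidableEq V] (Δ : Set (Finset V)) (q : ℕ) (σ₀ : Finset V) :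
    List (Finset V) → List (Finset V) → Prop :=
  Relation.EqvGen (fun a b => GridStep Δ q σ₀ a b ∨ Stretch a b ∨ Stretch b a)

/-- The type of `q`-loops of `Δ` based at `σ₀`. -/
def QLoop {V : Type*} [DecidableEq V] (Δ : Set (Finset V)) (q : ℕ) (σ₀ : Finset V) :=
  { l : List (Finset V) // IsQLoop Δ q σ₀ l }

/-- Discrete `q`-homotopy, as a relation on based `q`-loops. -/
def loopRel {V : Type*} [DecidableEq V] (Δ : Set (Finset V)) (q : ℕ) (σ₀ : Finset V)
    (a b : QLoop Δ q σ₀) : Prop :=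
  QHomotopic Δ q σ₀ a.1 b.1


/-!
Concatenation `a ++ b.tail` respects `q`-homotopy because putting fixed loops on both sides of
a grid or a stretch gives again a grid or a stretch: an entry of a `q`-chain with at least two
terms is `q`-near itself, so the padding columns are constant `q`-chains. Concatenation is
strictly associative with the constant loop as a strict left unit, so the only real work is
the inverse. In `a.reverse ++ a.tail` the innermost turn `x, y, x` is a grid step away from
`x, x, x`, which is a stretch of `x`; cancelling turns from the middle outwards collapses the
loop to the constant one.
-/

theorem Relation.EqvGen.map {α β : Type*} {r : α → α → Prop} {s : β → β → Prop} (f : α → β)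
    (hf : ∀ a b, r a b → EqvGen s (f a) (f b)) {a b : α} (h : EqvGen r a b) :
    EqvGen s (f a) (f b) := by
  induction h with
  | rel a b hab => exact hf a b hab
  | refl a => exact .refl _
  | symm a b _ ih => exact .symm _ _ ih
  | trans a b c _ _ ihab ihbc => exact .trans _ _ _ ihab ihbc

theorem Stretch.whisker {V : Type*} {a b : List (Finset V)} (u w : List (Finset V))
    (h : Stretch a b) : Stretch (u ++ a ++ w) (u ++ b ++ w) := by
  obtain ⟨l₁, l₂, σ, rfl, rfl⟩ := h
  exact ⟨u ++ l₁, l₂ ++ w, σ, by simp, by simp⟩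

theorem Stretch.reverse {V : Type*} {a b : List (Finset V)} (h : Stretch a b) :
    Stretch a.reverse b.reverse := by
  obtain ⟨l₁, l₂, σ, rfl, rfl⟩ := h
  exact ⟨l₂.reverse, l₁.reverse, σ, by simp, by simp⟩

section QHomotopy

variable {V : Type*} [DecidableEq V] {Δ : Set (Finset V)} {q : ℕ} {σ₀ : Finset V}

theorem qNear.symm {σ τ : Finset V} (h : qNear q σ τ) : qNear q τ σ := by
  rwa [qNear, Finset.inter_comm]

theorem qNear.self_left {σ τ : Finset V} (h : qNear q σ τ) : qNear q σ σ := by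
  rw [qNear, Finset.inter_self]
  exact h.trans (Finset.card_le_card Finset.inter_subset_left)

theorem List.IsChain.qNear_self_of_mem :
    ∀ {l : List (Finset V)}, l.IsChain (qNear q) → 2 ≤ l.length →
      ∀ {σ : Finset V}, σ ∈ l → qNear q σ σ
  | a :: b :: l, h, _, σ, hσ => by
    rw [List.isChain_cons_cons] at h
    rcases List.mem_cons.1 hσ with rfl | hσ
    · exact h.1.self_left
    · rcases l with _ | ⟨c, l⟩
      · rw [List.mem_singleton.1 hσ]
        exact h.1.symm.self_left
      · exact qNear_self_of_mem h.2 (by simp) hσ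

theorem IsQLoop.eq_cons_tail {l : List (Finset V)} (h : IsQLoop Δ q σ₀ l) :
    l = σ₀ :: l.tail := by
  obtain _ | ⟨x, t⟩ := l
  · exact absurd h.1 (by simp)
  · obtain rfl : x = σ₀ := by simpa using h.1
    rfl

theorem isQLoop_singleton (hmax : IsMaxSimp Δ σ₀) : IsQLoop Δ q σ₀ [σ₀] :=
  ⟨rfl, rfl, List.isChain_singleton _, by simpa using hmax⟩

theorem IsQLoop.append {a b : List (Finset V)} (ha : IsQLoop Δ q σ₀ a)
    (hb : IsQLoop Δ q σ₀ b) : IsQLoop Δ q σ₀ (a ++ b.tail) := by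
  obtain ⟨a', rfl⟩ := List.getLast?_eq_some_iff.1 ha.2.1
  rw [hb.eq_cons_tail] at hb
  rw [List.append_assoc, List.singleton_append]
  refine ⟨?_, ?_, List.isChain_split.2 ⟨ha.2.2.1, hb.2.2.1⟩, ?_⟩
  · simpa using ha.1
  · rw [List.getLast?_append_cons]
    exact hb.2.1
  · intro σ hσ
    rcases List.mem_append.1 hσ with hσ | hσ
    · exact ha.2.2.2 σ (List.mem_append_left _ hσ)
    · exact hb.2.2.2 σ hσ

theorem IsQLoop.reverse {a : List (Finset V)} (ha : IsQLoop Δ q σ₀ a) :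
    IsQLoop Δ q σ₀ a.reverse := by
  obtain ⟨h1, h2, h3, h4⟩ := ha
  refine ⟨by simpa using h2, by simpa using h1, ?_, by simpa using h4⟩
  exact List.isChain_reverse.2 (h3.imp fun _ _ h => h.symm)

theorem IsQLoop.whisker {u w r : List (Finset V)} (hu : IsQLoop Δ q σ₀ (u ++ [σ₀]))
    (hw : IsQLoop Δ q σ₀ (σ₀ :: w)) (hr : IsQLoop Δ q σ₀ r) : IsQLoop Δ q σ₀ (u ++ r ++ w) := by
  have hsplit : u ++ r ++ w = u ++ [σ₀] ++ r.tail ++ (σ₀ :: w).tail := by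
    conv_lhs => rw [hr.eq_cons_tail]
    simp
  rw [hsplit]
  exact (hu.append hr).append hw

theorem GridStep.of_forall₂ {a b : List (Finset V)} (ha : IsQLoop Δ q σ₀ a)
    (hb : IsQLoop Δ q σ₀ b) (hab : List.Forall₂ (qNear q) a b) : GridStep Δ q σ₀ a b := by
  refine ⟨[a, b], rfl, rfl, ?_, List.isChain_pair.2 hab⟩
  simp only [List.mem_cons, List.not_mem_nil, or_false]
  rintro r (rfl | rfl) <;> assumption

theorem GridStep.map {f : List (Finset V) → List (Finset V)}
    (hloop : ∀ r, IsQLoop Δ q σ₀ r → IsQLoop Δ q σ₀ (f r))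
    (hnear : ∀ r s, List.Forall₂ (qNear q) r s → List.Forall₂ (qNear q) (f r) (f s))
    {a b : List (Finset V)} (h : GridStep Δ q σ₀ a b) : GridStep Δ q σ₀ (f a) (f b) := by
  obtain ⟨rows, hhead, hlast, hrows, hchain⟩ := h
  refine ⟨rows.map f, by simp [hhead], by simp [hlast], ?_, ?_⟩
  · simp only [List.mem_map]
    rintro _ ⟨r, hr, rfl⟩
    exact hloop r (hrows r hr)
  · exact (List.isChain_map f).2 (hchain.imp fun r s => hnear r s)

theorem QHomotopic.map {f : List (Finset V) → List (Finset V)}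
    (hgrid : ∀ a b, GridStep Δ q σ₀ a b → GridStep Δ q σ₀ (f a) (f b))
    (hstretch : ∀ a b, Stretch a b → Stretch (f a) (f b))
    {x y : List (Finset V)} (h : QHomotopic Δ q σ₀ x y) : QHomotopic Δ q σ₀ (f x) (f y) :=
  Relation.EqvGen.map f (fun a b hab => .rel _ _ <|
    hab.imp (hgrid a b) (Or.imp (hstretch a b) (hstretch b a))) h

theorem QHomotopic.whisker {u w : List (Finset V)} (hu : IsQLoop Δ q σ₀ (u ++ [σ₀]))
    (hw : IsQLoop Δ q σ₀ (σ₀ :: w)) {x y : List (Finset V)} (h : QHomotopic Δ q σ₀ x y) :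
    QHomotopic Δ q σ₀ (u ++ x ++ w) (u ++ y ++ w) := by
  have hu' : List.Forall₂ (qNear q) u u := List.forall₂_same.2 fun σ hσ =>
    hu.2.2.1.qNear_self_of_mem
      (by rw [List.length_append]; exact Nat.succ_le_succ (List.length_pos_of_mem hσ))
      (by simp [hσ])
  have hw' : List.Forall₂ (qNear q) w w := List.forall₂_same.2 fun σ hσ =>
    hw.2.2.1.qNear_self_of_mem (Nat.succ_le_succ (List.length_pos_of_mem hσ)) (by simp [hσ])
  refine h.map (fun _ _ => GridStep.map (fun _ hr => hu.whisker hw hr) fun _ _ hrs => ?_)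
    (fun _ _ => Stretch.whisker u w)
  exact List.rel_append (List.rel_append hu' hrs) hw'

theorem QHomotopic.reverse {x y : List (Finset V)} (h : QHomotopic Δ q σ₀ x y) :
    QHomotopic Δ q σ₀ x.reverse y.reverse :=
  h.map (fun _ _ => GridStep.map (fun _ hr => hr.reverse) fun _ _ hrs => List.rel_reverse hrs)
    fun _ _ => Stretch.reverse

theorem QHomotopic.append_tail (hmax : IsMaxSimp Δ σ₀) {a₁ a₂ b₁ b₂ : List (Finset V)}
    (ha₂ : IsQLoop Δ q σ₀ a₂) (hb₁ : IsQLoop Δ q σ₀ b₁) (hb₂ : IsQLoop Δ q σ₀ b₂)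
    (ha : QHomotopic Δ q σ₀ a₁ a₂) (hb : QHomotopic Δ q σ₀ b₁ b₂) :
    QHomotopic Δ q σ₀ (a₁ ++ b₁.tail) (a₂ ++ b₂.tail) := by
  have hleft : QHomotopic Δ q σ₀ (a₁ ++ b₁.tail) (a₂ ++ b₁.tail) := by
    simpa using ha.whisker (u := []) (isQLoop_singleton hmax) (hb₁.eq_cons_tail ▸ hb₁)
  have hright : QHomotopic Δ q σ₀ (a₂ ++ b₁.tail) (a₂ ++ b₂.tail) := by
    obtain ⟨a', rfl⟩ := List.getLast?_eq_some_iff.1 ha₂.2.1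
    have := hb.whisker (w := []) ha₂ (isQLoop_singleton hmax)
    rw [hb₁.eq_cons_tail, hb₂.eq_cons_tail, List.append_nil, List.append_nil] at this
    simpa using this
  exact hleft.trans _ _ _ hright

theorem QHomotopic.cancel_turn {u v : List (Finset V)} {x y : Finset V}
    (h : IsQLoop Δ q σ₀ (u ++ x :: y :: x :: v)) :
    QHomotopic Δ q σ₀ (u ++ x :: y :: x :: v) (u ++ x :: v) := by
  obtain ⟨hhead, hlast, hchain, hfacets⟩ := h
  obtain ⟨hu, hxy, hyxv⟩ := List.isChain_append_cons_cons.1 hchain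
  obtain ⟨hyx, hv⟩ := List.isChain_cons_cons.1 hyxv
  have hxx : qNear q x x := hxy.self_left
  have hflat : IsQLoop Δ q σ₀ (u ++ x :: x :: x :: v) := by
    refine ⟨by simpa using hhead, by simpa [List.getLast?_append_cons] using hlast,
      List.isChain_append_cons_cons.2 ⟨hu, hxx, List.isChain_cons_cons.2 ⟨hxx, hv⟩⟩, ?_⟩
    intro σ hσ
    apply hfacets
    simp only [List.mem_append, List.mem_cons] at hσ ⊢
    tauto
  have hnear : List.Forall₂ (qNear q) (u ++ x :: y :: x :: v) (u ++ x :: x :: x :: v) := by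
    refine List.rel_append (List.forall₂_same.2 fun σ hσ => ?_)
      (.cons hxx (.cons hyx (.cons hxx (List.forall₂_same.2 fun σ hσ => ?_))))
    all_goals
      exact List.IsChain.qNear_self_of_mem hchain
        (by simp only [List.length_append, List.length_cons]; omega) (by simp [hσ])
  have hgrid : GridStep Δ q σ₀ (u ++ x :: y :: x :: v) (u ++ x :: x :: x :: v) :=
    GridStep.of_forall₂ ⟨hhead, hlast, hchain, hfacets⟩ hflat hnear
  have hstretch₁ : Stretch (u ++ x :: v) (u ++ x :: x :: v) := ⟨u, v, x, by simp, by simp⟩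
  have hstretch₂ : Stretch (u ++ x :: x :: v) (u ++ x :: x :: x :: v) :=
    ⟨u, x :: v, x, by simp, by simp⟩
  exact (Relation.EqvGen.rel _ _ (.inl hgrid)).trans _ _ _ <|
    ((Relation.EqvGen.rel _ _ (.inr (.inl hstretch₁))).trans _ _ _
      (.rel _ _ (.inr (.inl hstretch₂)))).symm

theorem isQLoop_reverse_append_tail {t : List (Finset V)} (hlast : t.getLast? = some σ₀)
    (hchain : t.IsChain (qNear q)) (hfacets : ∀ σ ∈ t, IsMaxSimp Δ σ) :
    IsQLoop Δ q σ₀ (t.reverse ++ t.tail) := by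
  obtain _ | ⟨x, s⟩ := t
  · simp at hlast
  have hrev : (x :: s).reverse.IsChain (qNear q) :=
    List.isChain_reverse.2 (hchain.imp fun _ _ h => h.symm)
  simp only [List.reverse_cons, List.tail_cons, List.append_assoc, List.singleton_append]
  refine ⟨?_, ?_, List.isChain_split.2 ⟨by simpa using hrev, hchain⟩, ?_⟩
  · rw [List.getLast?_cons] at hlast
    simpa [List.head?_append] using hlast
  · rwa [List.getLast?_append_cons]
  · intro σ hσ
    apply hfacets
    simp only [List.mem_append, List.mem_reverse, List.mem_cons] at hσ ⊢
    tauto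

theorem QHomotopic.reverse_append_tail :
    ∀ {t : List (Finset V)}, t.getLast? = some σ₀ → t.IsChain (qNear q) →
      (∀ σ ∈ t, IsMaxSimp Δ σ) → QHomotopic Δ q σ₀ (t.reverse ++ t.tail) [σ₀]
  | [x], hlast, _, _ => by
    obtain rfl : x = σ₀ := by simpa using hlast
    exact .refl _
  | x :: z :: s, hlast, hchain, hfacets => by
    have hturn :
        (x :: z :: s).reverse ++ (x :: z :: s).tail = s.reverse ++ z :: x :: z :: s := by
      simp
    have hloop := isQLoop_reverse_append_tail hlast hchain hfacets
    rw [hturn] at hloop ⊢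
    have hcollapse : s.reverse ++ z :: s = (z :: s).reverse ++ (z :: s).tail := by simp
    refine (QHomotopic.cancel_turn hloop).trans _ _ _ ?_
    rw [hcollapse]
    exact reverse_append_tail (by simpa using hlast) (List.isChain_cons_cons.1 hchain).2
      fun σ hσ => hfacets σ (List.mem_cons_of_mem _ hσ)

end QHomotopy

section LoopGroup

variable {V : Type*} [DecidableEq V] {Δ : Set (Finset V)} {q : ℕ} {σ₀ : Finset V}

theorem loopRel_equivalence : Equivalence (loopRel Δ q σ₀) :=
  (Relation.EqvGen.is_equivalence _).comap Subtype.val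

variable (Δ q σ₀) in
abbrev loopSetoid : Setoid (QLoop Δ q σ₀) :=
  ⟨loopRel Δ q σ₀, loopRel_equivalence⟩

def QLoop.concat (a b : QLoop Δ q σ₀) : QLoop Δ q σ₀ :=
  ⟨a.1 ++ b.1.tail, a.2.append b.2⟩

def QLoop.reverse (a : QLoop Δ q σ₀) : QLoop Δ q σ₀ :=
  ⟨a.1.reverse, a.2.reverse⟩

def QLoop.const (hmax : IsMaxSimp Δ σ₀) : QLoop Δ q σ₀ :=
  ⟨[σ₀], isQLoop_singleton hmax⟩

theorem QLoop.concat_assoc (a b c : QLoop Δ q σ₀) :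
    (a.concat b).concat c = a.concat (b.concat c) := by
  apply Subtype.ext
  change a.1 ++ b.1.tail ++ c.1.tail = a.1 ++ (b.1 ++ c.1.tail).tail
  rw [b.2.eq_cons_tail]
  simp

theorem QLoop.const_concat (hmax : IsMaxSimp Δ σ₀) (a : QLoop Δ q σ₀) :
    (const hmax).concat a = a :=
  Subtype.ext a.2.eq_cons_tail.symm

theorem QLoop.reverse_concat_rel (a : QLoop Δ q σ₀) (hmax : IsMaxSimp Δ σ₀) :
    loopRel Δ q σ₀ (a.reverse.concat a) (const hmax) :=
  QHomotopic.reverse_append_tail a.2.2.1 a.2.2.2.1 a.2.2.2.2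

abbrev loopGroup (hmax : IsMaxSimp Δ σ₀) : Group (Quotient (loopSetoid Δ q σ₀)) :=
  letI : Mul (Quotient (loopSetoid Δ q σ₀)) := ⟨Quotient.map₂ QLoop.concat
    fun _ a₂ ha b₁ b₂ hb => QHomotopic.append_tail hmax a₂.2 b₁.2 b₂.2 ha hb⟩
  letI : One (Quotient (loopSetoid Δ q σ₀)) := ⟨⟦QLoop.const hmax⟧⟩
  letI : Inv (Quotient (loopSetoid Δ q σ₀)) :=
    ⟨Quotient.map QLoop.reverse fun _ _ h => QHomotopic.reverse h⟩
  Group.ofLeftAxioms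
    (fun a b c => Quotient.inductionOn₃ a b c fun a b c => congrArg _ (a.concat_assoc b c))
    (fun a => Quotient.inductionOn a fun a => congrArg _ (QLoop.const_concat hmax a))
    (fun a => Quotient.inductionOn a fun a => Quotient.sound (a.reverse_concat_rel hmax))

end LoopGroup

theorem stmt_18_general (V : Type*) [DecidableEq V] (Δ : Set (Finset V))
    (q : ℕ) (σ₀ : Finset V) (hmax : IsMaxSimp Δ σ₀) :
    ∃ hEq : Equivalence (loopRel Δ q σ₀),
      ∃ _grp : Group (Quotient (Setoid.mk (loopRel Δ q σ₀) hEq)),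
        (∀ a b c : QLoop Δ q σ₀, c.1 = a.1 ++ b.1.tail →
          Quotient.mk (Setoid.mk (loopRel Δ q σ₀) hEq) c =
            Quotient.mk (Setoid.mk (loopRel Δ q σ₀) hEq) a *
              Quotient.mk (Setoid.mk (loopRel Δ q σ₀) hEq) b) ∧
        (∀ e : QLoop Δ q σ₀, e.1 = [σ₀] →
          (1 : Quotient (Setoid.mk (loopRel Δ q σ₀) hEq)) =
            Quotient.mk (Setoid.mk (loopRel Δ q σ₀) hEq) e) ∧
        (∀ a b : QLoop Δ q σ₀, b.1 = a.1.reverse →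
          (Quotient.mk (Setoid.mk (loopRel Δ q σ₀) hEq) a)⁻¹ =
            Quotient.mk (Setoid.mk (loopRel Δ q σ₀) hEq) b) :=
  ⟨loopRel_equivalence, loopGroup hmax,
    fun _ _ _ h => congrArg _ (Subtype.ext h),
    fun _ h => congrArg _ (Subtype.ext h.symm),
    fun _ _ h => congrArg _ (Subtype.ext h.symm)⟩

/-- For a simplicial complex `Δ` and a maximal simplex `σ₀` of dimension at least `q`,
discrete `q`-homotopy is an equivalence relation on `q`-loops based at `σ₀`, and
concatenation induces a group structure on the set `A₁^q(Δ, σ₀)` of equivalence classes,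
with identity the class of the constant loop and inverses given by reversal of loops. -/
theorem stmt_18 (V : Type*) [DecidableEq V] (Δ : Set (Finset V))
    (hΔ : ∀ σ ∈ Δ, ∀ τ : Finset V, τ ⊆ σ → τ ∈ Δ)
    (q : ℕ) (σ₀ : Finset V) (hmax : IsMaxSimp Δ σ₀) (hdim : q + 1 ≤ σ₀.card) :
    ∃ hEq : Equivalence (loopRel Δ q σ₀),
      ∃ _grp : Group (Quotient (Setoid.mk (loopRel Δ q σ₀) hEq)),
        (∀ a b c : QLoop Δ q σ₀, c.1 = a.1 ++ b.1.tail →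
          Quotient.mk (Setoid.mk (loopRel Δ q σ₀) hEq) c =
            Quotient.mk (Setoid.mk (loopRel Δ q σ₀) hEq) a *
              Quotient.mk (Setoid.mk (loopRel Δ q σ₀) hEq) b) ∧
        (∀ e : QLoop Δ q σ₀, e.1 = [σ₀] →
          (1 : Quotient (Setoid.mk (loopRel Δ q σ₀) hEq)) =
            Quotient.mk (Setoid.mk (loopRel Δ q σ₀) hEq) e) ∧
        (∀ a b : QLoop Δ q σ₀, b.1 = a.1.reverse →
          (Quotient.mk (Setoid.mk (loopRel Δ q σ₀) hEq) a)⁻¹ =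
            Quotient.mk (Setoid.mk (loopRel Δ q σ₀) hEq) b) :=
  stmt_18_general V Δ q σ₀ hmax
end
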